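/- No braid whose super-Gauss-Epple image has permutation part equal to the transposition (1,2) has its square in the kernel of the super-Gauss-Epple homomorphism: if β ∈ B_n satisfies SGE(β) = (M, (1,2)) for some matrix M, then SGE(β²) is not the identity element of Mat_n(ℤ) ⋊ S_n. (Consequently the image of SGE is not a semidirect product of its normal abelian subgroup by S_n.) -/

import Mathlib

/-- The braid relations. -/
def braidRels (n : ℕ) : Set (FreeGroup (Fin (n - 1))) :=
  {r | (∃ i j : Fin (n - 1), (j : ℕ) = (i : ℕ) + 1 ∧
        r = .of i * .of j * .of i * (.of j * .of i * .of j)⁻¹) ∨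
       (∃ i j : Fin (n - 1), (i : ℕ) + 2 ≤ (j : ℕ) ∧
        r = .of i * .of j * (.of j * .of i)⁻¹)}

/-- The braid group `B_n`. -/
abbrev BraidGroup (n : ℕ) := PresentedGroup (braidRels n)

/-- The Artin generator `σ_{k+1}` (0-based index `k`). -/
def braidGen {n : ℕ} (i : Fin (n - 1)) : BraidGroup n := PresentedGroup.of i

/-- The strand index `k`, viewed inside `Fin n`. -/
def lo {n : ℕ} (k : Fin (n - 1)) : Fin n := ⟨k, by have := k.isLt; omega⟩

/-- The strand index `k + 1`, viewed inside `Fin n`. -/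
def hi {n : ℕ} (k : Fin (n - 1)) : Fin n := ⟨(k : ℕ) + 1, by have := k.isLt; omega⟩

/-- The action of `S_n` on `n × n` integer matrices, simultaneously permuting rows and
columns: `(π·M)[i,j] = M[π⁻¹ i, π⁻¹ j]`. -/
def matPermAct (n : ℕ) :
    Equiv.Perm (Fin n) →* MulAut (Multiplicative (Matrix (Fin n) (Fin n) ℤ)) where
  toFun π :=
    { toFun := fun M => Multiplicative.ofAdd fun i j => Multiplicative.toAdd M (π⁻¹ i) (π⁻¹ j)
      invFun := fun M => Multiplicative.ofAdd fun i j => Multiplicative.toAdd M (π i) (π j)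
      left_inv := fun M => by
        show Multiplicative.ofAdd (fun i j => Multiplicative.toAdd M (π⁻¹ (π i)) (π⁻¹ (π j))) = M
        simp
        rfl
      right_inv := fun M => by
        show Multiplicative.ofAdd (fun i j => Multiplicative.toAdd M (π (π⁻¹ i)) (π (π⁻¹ j))) = M
        simp
        rfl
      map_mul' := fun M M' => rfl }
  map_one' := by ext M; simp
  map_mul' := fun π ρ => by
    ext M
    simp [Equiv.Perm.mul_apply]
    rfl

/-- The semidirect product `Mat_n(ℤ) ⋊ S_n`. -/
abbrev SGEGroup (n : ℕ) :=
  SemidirectProduct (Multiplicative (Matrix (Fin n) (Fin n) ℤ)) (Equiv.Perm (Fin n))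
    (matPermAct n)

/-- The value `(O_{k,k+1}, (k, k+1))` of the super-Gauss-Epple homomorphism on the
generator `σ_k`, where `O_{i,j}` is the matrix with a single `1` entry at `(i,j)`. -/
def sgeGen {n : ℕ} (k : Fin (n - 1)) : SGEGroup n :=
  ⟨Multiplicative.ofAdd (Matrix.single (lo k) (hi k) 1), Equiv.swap (lo k) (hi k)⟩

/-
The sum of all matrix entries is invariant under simultaneous permutation of rows and columns, so
it defines a homomorphism `Mat_n(ℤ) ⋊ S_n → ℤ`. On each generator `SGE(σ_k)` the entry sum is `1`
and the permutation is a transposition, hence `(-1)^(entry sum) = sign` on the whole image of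
`SGE`. If the permutation part of `SGE(β)` is `(1,2)`, the entry sum `s` of `SGE(β)` is therefore
odd, and the entry sum of `SGE(β²)` is `2s ≠ 0`.
-/

namespace Matrix

variable {m n α : Type*} [Fintype m] [Fintype n] [AddCommMonoid α]

def entrySum (A : Matrix m n α) : α := ∑ i, ∑ j, A i j

@[simp]
lemma entrySum_add (A B : Matrix m n α) : (A + B).entrySum = A.entrySum + B.entrySum := by
  simp only [entrySum, add_apply, Finset.sum_add_distrib]

@[simp]
lemma entrySum_single [DecidableEq m] [DecidableEq n] (i : m) (j : n) (a : α) :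
    (single i j a).entrySum = a := by
  simp [entrySum, single, ite_and, Finset.sum_ite_eq]

@[simp]
lemma entrySum_submatrix_equiv (A : Matrix m n α) (e : m ≃ m) (f : n ≃ n) :
    (A.submatrix e f).entrySum = A.entrySum := by
  calc ∑ i, ∑ j, A (e i) (f j) = ∑ i, ∑ j, A (e i) j :=
        Finset.sum_congr rfl fun i _ => Equiv.sum_comp f (A (e i))
    _ = ∑ i, ∑ j, A i j := Equiv.sum_comp e fun i => ∑ j, A i j

end Matrix

def sgeEntrySum (n : ℕ) : SGEGroup n →* Multiplicative ℤ where
  toFun g := Multiplicative.ofAdd (Multiplicative.toAdd g.left).entrySum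
  map_one' := by simp [Matrix.entrySum]
  map_mul' g h := by
    show Multiplicative.ofAdd (Multiplicative.toAdd g.left +
        (Multiplicative.toAdd h.left).submatrix ⇑g.right⁻¹ ⇑g.right⁻¹).entrySum = _
    simp

lemma sgeEntrySum_sgeGen {n : ℕ} (k : Fin (n - 1)) :
    sgeEntrySum n (sgeGen k) = Multiplicative.ofAdd 1 :=
  congrArg Multiplicative.ofAdd (Matrix.entrySum_single _ _ _)

lemma lo_ne_hi {n : ℕ} (k : Fin (n - 1)) : lo k ≠ hi k := by
  simp [lo, hi, Fin.ext_iff]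

lemma neg_one_zpow_sgeEntrySum_eq_sign {n : ℕ} (SGE : BraidGroup n →* SGEGroup n)
    (hSGE : ∀ k : Fin (n - 1), SGE (braidGen k) = sgeGen k) (b : BraidGroup n) :
    (-1 : ℤˣ) ^ (sgeEntrySum n (SGE b)).toAdd = Equiv.Perm.sign (SGE b).right := by
  suffices h : ((zpowersHom ℤˣ (-1)).comp ((sgeEntrySum n).comp SGE))
      = Equiv.Perm.sign.comp (SemidirectProduct.rightHom.comp SGE) from
    DFunLike.congr_fun h b
  refine PresentedGroup.ext fun k => ?_
  have hk : SGE (PresentedGroup.of k) = sgeGen k := hSGE k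
  simp only [MonoidHom.comp_apply, hk, sgeEntrySum_sgeGen, zpowersHom_apply,
    SemidirectProduct.rightHom_eq_right]
  rw [sgeGen, Equiv.Perm.sign_swap (lo_ne_hi k)]
  simp

/-- If `SGE(β) = (M, (1,2))` for some matrix `M`, then `SGE(β²) ≠ 1`: no braid whose
super-Gauss-Epple image has permutation part `(1,2)` has its square in the kernel of
`SGE`. -/
theorem sq_not_in_ker_SGE (n : ℕ) (hn : 2 ≤ n)
    (SGE : BraidGroup n →* SGEGroup n)
    (hSGE : ∀ k : Fin (n - 1), SGE (braidGen k) = sgeGen k)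
    (β : BraidGroup n) (M : Matrix (Fin n) (Fin n) ℤ)
    (hβ : SGE β = ⟨Multiplicative.ofAdd M,
      Equiv.swap (⟨0, by omega⟩ : Fin n) (⟨1, by omega⟩ : Fin n)⟩) :
    SGE (β * β) ≠ 1 := by
  set s := (sgeEntrySum n (SGE β)).toAdd
  have hodd : (-1 : ℤˣ) ^ s = -1 := by
    rw [neg_one_zpow_sgeEntrySum_eq_sign SGE hSGE, hβ]
    exact Equiv.Perm.sign_swap (by simp [Fin.ext_iff])
  have hs : s ≠ 0 := by
    rintro hs
    rw [hs, zpow_zero] at hodd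
    exact absurd hodd (by decide)
  intro hsq
  have hdouble : s + s = 0 := by
    simpa [s] using congrArg (fun g => (sgeEntrySum n g).toAdd) hsq
  omega
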